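/- arXiv:1207.2379 — 4 statements merged into one kernel-verified Lean document; each statement's English description precedes it below -/
import Mathlib

section
/- A 132-avoiding permutation of {1,...,n} is uniquely determined by the set of positions of its left-to-right minima together with the set of values that are left-to-right minima. That is, if two 132-avoiding permutations of the same length have the same set of positions of left-to-right minima and the same set of values of left-to-right minima, then they are equal. -/
/-!
Compare `p` and `q` position by position. If they agree before position `j`, the value `p j`
cannot occur in `q` before `j`. Should `p j < q j`, either `j` is a left-to-right minimum of `p`,
and then of `q`, so `q j` is a left-to-right minimum value of `q`, hence of `p`, at a position
`k ≥ j` where `p k = q j < p j` is impossible; or some `i < j` has `p i < p j`, and then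
`q i < q k < q j` with `q k = p j`, `j < k`, is a 132 pattern in `q`.
-/

/-- `p i` is a left-to-right minimum. -/
def LTRMin {n : ℕ} (p : Equiv.Perm (Fin n)) (i : Fin n) : Prop := ∀ j < i, p i < p j

def Avoids132 {n : ℕ} (p : Equiv.Perm (Fin n)) : Prop :=
  ¬ ∃ i j k : Fin n, i < j ∧ j < k ∧ p i < p k ∧ p k < p j

open Equiv

section

variable {n : ℕ} {p q : Perm (Fin n)} {j : Fin n}

theorem le_symm_apply_of_eqOn_Iio (h : Set.EqOn p q (Set.Iio j)) : j ≤ q.symm (p j) := by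
  by_contra! hk
  have : p (q.symm (p j)) = p j := by rw [h hk, apply_symm_apply]
  exact hk.ne (p.injective this)

theorem le_apply_of_ltrMin_symm_apply_of_eqOn_Iio (hmin : LTRMin p (p.symm (q j)))
    (h : Set.EqOn p q (Set.Iio j)) : q j ≤ p j := by
  have hk : j ≤ p.symm (q j) := le_symm_apply_of_eqOn_Iio fun i hi => (h hi).symm
  rcases hk.eq_or_lt with hjk | hjk
  · exact (p.eq_symm_apply.1 hjk).ge
  · simpa using (hmin j hjk).le

theorem le_apply_of_not_ltrMin_of_eqOn_Iio (hq : Avoids132 q) (hj : ¬ LTRMin p j)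
    (h : Set.EqOn p q (Set.Iio j)) : q j ≤ p j := by
  obtain ⟨i, hij, hpi⟩ : ∃ i < j, p i ≤ p j := by simpa [LTRMin] using hj
  have hpi : p i < p j := hpi.lt_of_ne fun he => hij.ne (p.injective he)
  have hk : j ≤ q.symm (p j) := le_symm_apply_of_eqOn_Iio h
  rcases hk.eq_or_lt with hjk | hjk
  · exact (q.eq_symm_apply.1 hjk).le
  · by_contra! hlt
    exact hq ⟨i, j, _, hij, hjk, by rwa [apply_symm_apply, ← h hij], by rwa [apply_symm_apply]⟩

theorem le_apply_of_eqOn_Iio (hq : Avoids132 q) (hpos : LTRMin p j → LTRMin q j)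
    (hval : LTRMin q j → LTRMin p (p.symm (q j))) (h : Set.EqOn p q (Set.Iio j)) :
    q j ≤ p j := by
  by_cases hj : LTRMin p j
  · exact le_apply_of_ltrMin_symm_apply_of_eqOn_Iio (hval (hpos hj)) h
  · exact le_apply_of_not_ltrMin_of_eqOn_Iio hq hj h

end

/-- A 132-avoiding permutation is determined by the positions and the values
of its left-to-right minima. -/
theorem stmt9 {n : ℕ} (p q : Equiv.Perm (Fin n))
    (hp : Avoids132 p) (hq : Avoids132 q)
    (hpos : ∀ i : Fin n, LTRMin p i ↔ LTRMin q i)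
    (hval : ∀ v : Fin n, LTRMin p (p.symm v) ↔ LTRMin q (q.symm v)) :
    p = q := by
  refine Equiv.ext fun x => wellFounded_lt.induction x fun j h => le_antisymm ?_ ?_
  · refine le_apply_of_eqOn_Iio hp (hpos j).2 (fun hj => ?_) fun i hi => (h i hi).symm
    simpa using (hval (p j)).1 (by simpa using hj)
  · refine le_apply_of_eqOn_Iio hq (hpos j).1 (fun hj => ?_) fun i hi => h i hi
    simpa using (hval (q j)).2 (by simpa using hj)
end

section
/- A 213-avoiding permutation of {1,...,n} is uniquely determined by the set of positions of its right-to-left maxima together with the set of values that are right-to-left maxima. -/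
/-- `p i` is a right-to-left maximum. -/
def RTLMax {n : ℕ} (p : Equiv.Perm (Fin n)) (i : Fin n) : Prop := ∀ j, i < j → p j < p i

def Avoids213 {n : ℕ} (p : Equiv.Perm (Fin n)) : Prop :=
  ¬ ∃ i j k : Fin n, i < j ∧ j < k ∧ p j < p i ∧ p i < p k

/-!
Compare `p` and `q` at the rightmost position `i` where they differ, say with `p i < q i`.
The value `q i` occurs in `p` to the left of `i`, so if some `q c` with `c > i` exceeded `q i`,
then `p` would contain the pattern `q i, p i, q c = p c` of type 213; hence `i` is a
right-to-left maximum of `q`, and therefore of `p`. The value `p i` then is a right-to-left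
maximum value of `q`, sitting left of `i` in `q`, which forces `q i < p i`.
-/

open Set

theorem Equiv.Perm.symm_apply_lt_of_eqOn_Ioi {α : Type*} [LinearOrder α] {p q : Equiv.Perm α}
    {i : α} (h : EqOn p q (Ioi i)) (hne : p i ≠ q i) : p.symm (q i) < i := by
  rcases lt_trichotomy (p.symm (q i)) i with hlt | heq | hgt
  · exact hlt
  · have := congrArg p heq
    rw [Equiv.apply_symm_apply] at this
    exact absurd this.symm hne
  · have : q i = q (p.symm (q i)) := by rw [← h hgt, Equiv.apply_symm_apply]
    exact absurd (q.injective this) hgt.ne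

variable {n : ℕ} {p q : Equiv.Perm (Fin n)} {i : Fin n}

theorem RTLMax.le_of_eqOn_Ioi (hR : RTLMax q (q.symm (p i))) (h : EqOn p q (Ioi i)) :
    q i ≤ p i := by
  by_cases hne : q i = p i
  · exact hne.le
  · have := hR i (Equiv.Perm.symm_apply_lt_of_eqOn_Ioi (fun j hj => (h hj).symm) hne)
    rw [Equiv.apply_symm_apply] at this
    exact this.le

theorem Avoids213.rtlMax_of_eqOn_Ioi (hp : Avoids213 p) (h : EqOn p q (Ioi i))
    (hlt : p i < q i) : RTLMax q i := by
  intro c hic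
  by_contra! hqc
  have hqc : q i < q c := hqc.lt_of_ne (q.injective.ne hic.ne)
  refine hp ⟨p.symm (q i), i, c,
    Equiv.Perm.symm_apply_lt_of_eqOn_Ioi h hlt.ne, hic, ?_, ?_⟩
  · rwa [Equiv.apply_symm_apply]
  · rwa [Equiv.apply_symm_apply, h hic]

theorem Avoids213.not_lt_of_eqOn_Ioi (hp : Avoids213 p) (hpos : RTLMax q i → RTLMax p i)
    (hval : ∀ v, RTLMax p (p.symm v) → RTLMax q (q.symm v)) (h : EqOn p q (Ioi i)) :
    ¬ p i < q i := fun hlt => by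
  have hRp : RTLMax p (p.symm (p i)) := by
    rw [Equiv.symm_apply_apply]
    exact hpos (hp.rtlMax_of_eqOn_Ioi h hlt)
  exact (hval _ hRp).le_of_eqOn_Ioi h |>.not_gt hlt

/-- A 213-avoiding permutation is determined by the positions and the values
of its right-to-left maxima. -/
theorem stmt10 {n : ℕ} (p q : Equiv.Perm (Fin n))
    (hp : Avoids213 p) (hq : Avoids213 q)
    (hpos : ∀ i : Fin n, RTLMax p i ↔ RTLMax q i)
    (hval : ∀ v : Fin n, RTLMax p (p.symm v) ↔ RTLMax q (q.symm v)) :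
    p = q := by
  refine Equiv.ext fun i => ?_
  induction i using WellFoundedGT.induction with
  | _ i ih =>
    have h : EqOn p q (Ioi i) := fun j hj => ih j hj
    rcases lt_trichotomy (p i) (q i) with hlt | heq | hgt
    · exact absurd hlt (hp.not_lt_of_eqOn_Ioi (hpos i).mpr (fun v => (hval v).mp) h)
    · exact heq
    · exact absurd hgt (hq.not_lt_of_eqOn_Ioi (hpos i).mp (fun v => (hval v).mpr) h.symm)
end

section
/- In a 132-avoiding permutation, the left-to-right minima occur in decreasing order, and every entry that is not a left-to-right minimum, when positions are processed left to right, equals the smallest remaining value larger than the closest left-to-right minimum to its left. -/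
/-!
The closest left-to-right minimum to the left of `i` sits at the position `j` of the smallest
entry among `p 0, …, p (i-1)`. A value `v` with `p j < v < p i` that does not occur before `i`
would occur after `i`, and `p j, p i, v` would form a 132 pattern.
-/

variable {n : ℕ} {p : Equiv.Perm (Fin n)}

theorem exists_forall_le_of_lt {α : Type*} [LinearOrder α] (f : Fin n → α) {i k : Fin n}
    (hk : k < i) : ∃ j < i, ∀ l < i, f j ≤ f l := by
  obtain ⟨j, hj, hmin⟩ := (Finset.univ.filter (· < i)).exists_min_image f ⟨k, by simpa using hk⟩
  exact ⟨j, by simpa using hj, fun l hl => hmin l (by simpa using hl)⟩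

theorem ltrMin_of_forall_le {j : Fin n} (h : ∀ k < j, p j ≤ p k) : LTRMin p j :=
  fun k hk => (h k hk).lt_of_ne (p.injective.ne hk.ne')

theorem Avoids132.le_of_forall_ne {i j : Fin n} {v : Fin n} (hp : Avoids132 p) (hji : j < i)
    (hjv : p j < v) (hv : ∀ k < i, p k ≠ v) : p i ≤ v := by
  by_contra! hvi
  have him : i < p.symm v := by
    rcases lt_trichotomy (p.symm v) i with hlt | heq | hgt
    · exact absurd (p.apply_symm_apply v) (hv _ hlt)
    · exact absurd (by simp [← heq]) hvi.ne'
    · exact hgt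
  exact hp ⟨j, i, p.symm v, hji, him, by simpa using hjv, by simpa using hvi⟩

/-- In a 132-avoiding permutation the left-to-right minima occur in decreasing order,
and every non-minimum entry is the smallest value not yet used that is larger than the
closest left-to-right minimum on its left. -/
theorem stmt11 {n : ℕ} (p : Equiv.Perm (Fin n)) (hp : Avoids132 p) :
    (∀ i j : Fin n, i < j → LTRMin p i → LTRMin p j → p j < p i) ∧
    (∀ i : Fin n, ¬ LTRMin p i →
      ∃ j : Fin n, j < i ∧ LTRMin p j ∧ (∀ k : Fin n, j < k → k < i → ¬ LTRMin p k) ∧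
        p j < p i ∧
        ∀ v : Fin n, p j < v → (∀ k < i, p k ≠ v) → p i ≤ v) := by
  refine ⟨fun i j hij _ hj => hj i hij, fun i hi => ?_⟩
  obtain ⟨k₀, hk₀i, hk₀⟩ : ∃ k < i, p k ≤ p i := by simpa [LTRMin] using hi
  obtain ⟨j, hji, hjmin⟩ := exists_forall_le_of_lt p hk₀i
  refine ⟨j, hji, ltrMin_of_forall_le fun k hk => hjmin k (hk.trans hji), ?_, ?_,
    fun v hjv hv => hp.le_of_forall_ne hji hjv hv⟩
  · exact fun k hjk hki hk => (hk j hjk).not_ge (hjmin k hki)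
  · exact ((hjmin k₀ hk₀i).trans hk₀).lt_of_ne (p.injective.ne hji.ne)
end

section
/- For all positive integers n, the number of 1324-avoiding permutations of length n is less than 16^n. -/
/-!
Bóna's colouring: scanning from left to right, an entry is blue if it is the `2` of a `132`
pattern whose `1` and `3` are red, and red otherwise. The red entries avoid `132` by
construction, and in a `1324`-avoiding permutation the blue entries avoid `213`.
By induction on positions, a `132`-avoiding sequence is determined by its set of values and the
positions and values of its left-to-right minima; dually for `213` and right-to-left maxima.
So a `1324`-avoider is determined by four subsets of the `n` positions or values: where the blue
entries stand and what they are, and where the marked entries (red left-to-right minima and blue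
right-to-left maxima) stand and what they are. The first entry is always marked, hence the count
is less than `16 ^ n`.
-/

def Avoids1324 {n : ℕ} (p : Equiv.Perm (Fin n)) : Prop :=
  ¬ ∃ i₁ i₂ i₃ i₄ : Fin n, i₁ < i₂ ∧ i₂ < i₃ ∧ i₃ < i₄ ∧
    p i₁ < p i₃ ∧ p i₃ < p i₂ ∧ p i₂ < p i₄

open Equiv Set Function OrderDual

section Avoids132

variable {α β : Type*} [LinearOrder α] [LinearOrder β] {S : Set α} {f g : α → β} {a : α}

def Avoids132On (S : Set α) (f : α → β) : Prop :=
  ∀ ⦃a⦄, a ∈ S → ∀ ⦃b⦄, b ∈ S → ∀ ⦃c⦄, c ∈ S → a < b → b < c → ¬(f a < f c ∧ f c < f b)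

def leftToRightMinima (S : Set α) (f : α → β) : Set α :=
  {a ∈ S | ∀ b ∈ S, b < a → f a < f b}

lemma le_of_mem_leftToRightMinima (hf : Injective f)
    (hmin : f '' leftToRightMinima S f ⊆ g '' leftToRightMinima S g)
    (heq : EqOn f g (S ∩ Iio a)) (ha : a ∈ leftToRightMinima S f) : f a ≤ g a := by
  obtain ⟨c, ⟨hc, hc_min⟩, hgc⟩ := hmin ⟨a, ha, rfl⟩
  rcases lt_trichotomy c a with hca | rfl | hac
  · exact absurd (hf ((heq ⟨hc, hca⟩).trans hgc)) hca.ne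
  · exact hgc.ge
  · exact hgc ▸ (hc_min a ha.1 hac).le

lemma le_of_notMem_leftToRightMinima (hf : Injective f) (hg132 : Avoids132On S g)
    (himage : f '' S ⊆ g '' S) (heq : EqOn f g (S ∩ Iio a))
    (ha : a ∈ S) (ha_min : a ∉ leftToRightMinima S f) : g a ≤ f a := by
  obtain ⟨b, hb, hba, hfb⟩ : ∃ b ∈ S, b < a ∧ f b < f a := by
    simp only [leftToRightMinima, mem_ofPred_eq, ha, true_and, not_forall, not_lt] at ha_min
    obtain ⟨b, hb, hba, hfb⟩ := ha_min
    exact ⟨b, hb, hba, hfb.lt_of_ne (hf.ne hba.ne)⟩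
  by_contra! hlt
  obtain ⟨c, hc, hgc⟩ := himage ⟨a, ha, rfl⟩
  have hac : a < c := by
    rcases lt_trichotomy c a with hca | rfl | hac
    · exact absurd (hf ((heq ⟨hc, hca⟩).trans hgc)) hca.ne
    · exact absurd hgc hlt.ne'
    · exact hac
  exact hg132 hb ha hc hba hac ⟨heq ⟨hb, hba⟩ ▸ hgc ▸ hfb, hgc ▸ hlt⟩

theorem Avoids132On.eqOn [WellFoundedLT α] (hf : Injective f) (hg : Injective g)
    (hf132 : Avoids132On S f) (hg132 : Avoids132On S g) (himage : f '' S = g '' S)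
    (hmin : leftToRightMinima S f = leftToRightMinima S g)
    (hminval : f '' leftToRightMinima S f = g '' leftToRightMinima S g) : EqOn f g S := by
  intro a
  induction a using WellFoundedLT.induction with
  | ind a IH =>
  intro ha
  have heq : EqOn f g (S ∩ Iio a) := fun b hb => IH b hb.2 hb.1
  by_cases ha_min : a ∈ leftToRightMinima S f
  · exact le_antisymm (le_of_mem_leftToRightMinima hf hminval.subset heq ha_min)
      (le_of_mem_leftToRightMinima hg hminval.symm.subset heq.symm (hmin ▸ ha_min))
  · exact le_antisymm
      (le_of_notMem_leftToRightMinima hg hf132 himage.symm.subset heq.symm ha (hmin ▸ ha_min))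
      (le_of_notMem_leftToRightMinima hf hg132 himage.subset heq ha ha_min)

end Avoids132

namespace Equiv.Perm

variable {n : ℕ}

def IsBlue (p : Perm (Fin n)) (i : Fin n) : Prop :=
  ∃ (x y : Fin n) (_ : x < y) (_ : y < i), ¬ IsBlue p x ∧ ¬ IsBlue p y ∧ p x < p i ∧ p i < p y
termination_by i.val
decreasing_by
  · exact Fin.lt_def.mp (lt_trans ‹x < y› ‹y < i›)
  · exact Fin.lt_def.mp ‹y < i›

lemma isBlue_iff (p : Perm (Fin n)) (i : Fin n) :
    p.IsBlue i ↔ ∃ x y, x < y ∧ y < i ∧ ¬ p.IsBlue x ∧ ¬ p.IsBlue y ∧ p x < p i ∧ p i < p y := by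
  rw [IsBlue]
  simp only [exists_prop]

def blueSet (p : Perm (Fin n)) : Set (Fin n) := {i | p.IsBlue i}

def redSet (p : Perm (Fin n)) : Set (Fin n) := (blueSet p)ᶜ

/-- The blue part consists of the right-to-left maxima among the blue entries, i.e. the
left-to-right minima for the reversed orders on positions and values. -/
def markedSet (p : Perm (Fin n)) : Set (Fin n) :=
  leftToRightMinima p.redSet p ∪
    toDual ⁻¹' leftToRightMinima (ofDual ⁻¹' p.blueSet) (toDual ∘ p ∘ ofDual)

def signature (p : Perm (Fin n)) : Set (Fin n) × Set (Fin n) × Set (Fin n) × Set (Fin n) :=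
  (p.blueSet, p '' p.blueSet, p.markedSet, p '' p.markedSet)

lemma avoids132On_redSet (p : Perm (Fin n)) : Avoids132On p.redSet p :=
  fun a ha b hb c hc hab hbc h => hc ((isBlue_iff p c).2 ⟨a, b, hab, hbc, ha, hb, h⟩)

end Equiv.Perm

namespace Avoids1324

variable {n : ℕ} {p : Perm (Fin n)}

lemma apply_lt_of_132 (hp : Avoids1324 p) {i₁ i₂ i₃ i₄ : Fin n} (h₁₂ : i₁ < i₂) (h₂₃ : i₂ < i₃)
    (h₃₄ : i₃ < i₄) (h₁₃ : p i₁ < p i₃) (h₃₂ : p i₃ < p i₂) : p i₄ < p i₂ :=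
  lt_of_le_of_ne (not_lt.1 fun h => hp ⟨i₁, i₂, i₃, i₄, h₁₂, h₂₃, h₃₄, h₁₃, h₃₂, h⟩)
    (p.injective.ne (h₂₃.trans h₃₄).ne')

lemma not_213_of_isBlue (hp : Avoids1324 p) {i j k : Fin n} (hi : p.IsBlue i) (hj : p.IsBlue j)
    (hij : i < j) (hjk : j < k) : ¬(p j < p i ∧ p i < p k) := by
  rintro ⟨hji, hik⟩
  obtain ⟨a, b, hab, hbi, ha, hb, hai, hib⟩ := (p.isBlue_iff i).1 hi
  obtain ⟨c, d, hcd, hdj, -, hd, hcj, hjd⟩ := (p.isBlue_iff j).1 hj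
  have hkd : p k < p d := hp.apply_lt_of_132 hcd hdj hjk hcj hjd
  have hic : i < c := by
    by_contra! hci
    have hci' : c < i := hci.lt_of_ne (ne_of_apply_ne p (hcj.trans hji).ne)
    exact hp ⟨c, i, j, k, hci', hij, hjk, hcj, hji, hik⟩
  have hdb : p d < p b := hp.apply_lt_of_132 hab hbi (hic.trans hcd) hai hib
  -- `a`, `b` and the red entry `d` would form a `132` with red `1` and `3`
  exact hd ((p.isBlue_iff d).2
    ⟨a, b, hab, hbi.trans (hic.trans hcd), ha, hb, hai.trans (hik.trans hkd), hdb⟩)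

/-- Reversing both orders turns `213` into `132`. -/
lemma avoids132On_blueSet (hp : Avoids1324 p) :
    Avoids132On (ofDual ⁻¹' p.blueSet) (toDual ∘ p ∘ ofDual) :=
  fun _ _ _ hj _ hi hkj hji h => hp.not_213_of_isBlue hi hj hji hkj ⟨h.2, h.1⟩

end Avoids1324

namespace Equiv.Perm

variable {n : ℕ} {p q : Perm (Fin n)}

lemma markedSet_inter_redSet (p : Perm (Fin n)) :
    p.markedSet ∩ p.redSet = leftToRightMinima p.redSet p := by
  ext i
  simp only [markedSet, redSet, leftToRightMinima, blueSet, mem_inter_iff, mem_union,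
    mem_preimage, mem_compl_iff, mem_ofPred_eq, ofDual_toDual]
  tauto

lemma markedSet_inter_blueSet (p : Perm (Fin n)) :
    ofDual ⁻¹' (p.markedSet ∩ p.blueSet) =
      leftToRightMinima (ofDual ⁻¹' p.blueSet) (toDual ∘ p ∘ ofDual) := by
  ext i
  simp only [markedSet, redSet, leftToRightMinima, blueSet, mem_inter_iff, mem_union,
    mem_preimage, mem_compl_iff, mem_ofPred_eq, ofDual_toDual]
  tauto

lemma eqOn_redSet_of_signature_eq (h : p.signature = q.signature) : EqOn p q p.redSet := by
  simp only [signature, Prod.mk.injEq] at h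
  obtain ⟨hB, hBv, hM, hMv⟩ := h
  have hR : q.redSet = p.redSet := by rw [redSet, redSet, hB]
  have himage : p '' p.redSet = q '' q.redSet := by
    simp only [redSet, Equiv.image_compl, hBv]
  have hmin : leftToRightMinima p.redSet p = leftToRightMinima q.redSet q := by
    rw [← markedSet_inter_redSet, ← markedSet_inter_redSet, hM, hR]
  have hminval : p '' leftToRightMinima p.redSet p = q '' leftToRightMinima q.redSet q := by
    rw [← markedSet_inter_redSet, ← markedSet_inter_redSet, image_inter p.injective,
      image_inter q.injective, hMv, himage]
  rw [hR] at himage hmin hminval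
  exact Avoids132On.eqOn p.injective q.injective p.avoids132On_redSet
    (hR ▸ q.avoids132On_redSet) himage hmin hminval

lemma eqOn_blueSet_of_signature_eq (hp : Avoids1324 p) (hq : Avoids1324 q)
    (h : p.signature = q.signature) : EqOn p q p.blueSet := by
  simp only [signature, Prod.mk.injEq] at h
  obtain ⟨hB, hBv, hM, hMv⟩ := h
  have hmin : leftToRightMinima (ofDual ⁻¹' p.blueSet) (toDual ∘ p ∘ ofDual) =
      leftToRightMinima (ofDual ⁻¹' q.blueSet) (toDual ∘ q ∘ ofDual) := by
    rw [← markedSet_inter_blueSet, ← markedSet_inter_blueSet, hM, hB]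
  have hminval :
      (toDual ∘ p ∘ ofDual) '' leftToRightMinima (ofDual ⁻¹' p.blueSet) (toDual ∘ p ∘ ofDual) =
      (toDual ∘ q ∘ ofDual) '' leftToRightMinima (ofDual ⁻¹' q.blueSet) (toDual ∘ q ∘ ofDual) := by
    rw [← markedSet_inter_blueSet, ← markedSet_inter_blueSet]
    have hval : p '' (p.markedSet ∩ p.blueSet) = q '' (q.markedSet ∩ q.blueSet) := by
      rw [image_inter p.injective, image_inter q.injective, hMv, hBv]
    exact congrArg (ofDual ⁻¹' ·) hval
  have himage : (toDual ∘ p ∘ ofDual) '' (ofDual ⁻¹' p.blueSet) =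
      (toDual ∘ q ∘ ofDual) '' (ofDual ⁻¹' q.blueSet) := congrArg (ofDual ⁻¹' ·) hBv
  rw [← hB] at himage hmin hminval
  exact Avoids132On.eqOn (f := toDual ∘ p ∘ ofDual) (g := toDual ∘ q ∘ ofDual)
    p.injective q.injective hp.avoids132On_blueSet (hB ▸ hq.avoids132On_blueSet)
    himage hmin hminval

theorem signature_injOn : InjOn (signature (n := n)) {p | Avoids1324 p} := fun p hp q hq h =>
  Equiv.ext fun i => by
    by_cases hi : p.IsBlue i
    · exact eqOn_blueSet_of_signature_eq hp hq h hi
    · exact eqOn_redSet_of_signature_eq h hi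

lemma zero_mem_markedSet [NeZero n] (p : Perm (Fin n)) : 0 ∈ p.markedSet := by
  have h0 : ¬ p.IsBlue 0 := by
    rw [isBlue_iff]
    rintro ⟨x, y, -, hy, -⟩
    exact Fin.not_lt_zero y hy
  exact Or.inl ⟨h0, fun b _ hb => absurd hb (Fin.not_lt_zero b)⟩

end Equiv.Perm

/-- S_n(1324) < 16^n. -/
theorem stmt16 : ∀ n : ℕ, 1 ≤ n →
    Nat.card {p : Equiv.Perm (Fin n) // Avoids1324 p} < 16 ^ n := by
  intro n hn
  have : NeZero n := ⟨by omega⟩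
  let sig (p : {p : Perm (Fin n) // Avoids1324 p}) := p.1.signature
  have hsig : Injective sig := fun p q h => Subtype.ext (Perm.signature_injOn p.2 q.2 h)
  have hmiss : (∅, ∅, ∅, ∅) ∉ range sig :=
    fun ⟨p, hp⟩ => (congrArg (fun s => 0 ∈ s.2.2.1) hp).mp p.1.zero_mem_markedSet
  calc Nat.card {p : Perm (Fin n) // Avoids1324 p}
      = Nat.card (range sig) := (Nat.card_range_of_injective hsig).symm
    _ < Nat.card (Set (Fin n) × Set (Fin n) × Set (Fin n) × Set (Fin n)) :=
        Finite.card_subtype_lt hmiss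
    _ = 16 ^ n := by
        rw [Nat.card_eq_fintype_card]
        simp only [Fintype.card_prod, Fintype.card_set, Fintype.card_fin, ← mul_pow, Nat.reduceMul]
end
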